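/- Let k ≥ 3, let A be a first-order expansion of the canonical k-ary structure of a permutation group G. Let φ1 be a (C,u1,D,v1)-implication and φ2 a (D,u2,E,v2)-implication in A with proj_{v1}(φ1^A) = proj_{u2}(φ2^A). Then φ := φ1∘φ2 is a (C,u1,E,v2)-pre-implication in A. Moreover, for all orbits O1 ⊆ proj_{u1}(φ1^A) and O3 ⊆ proj_{v2}(φ2^A) under G, φ^A contains an O1O3-mapping if, and only if, there exists an orbit O2 under G such that φ1^A contains an O1O2-mapping and φ2^A contains an O2O3-mapping. -/

import Mathlib

/-!
Gluing a satisfying assignment of `φ₁` and one of `φ₂` that agree on `v₁ = u₂` gives a satisfying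
assignment of `φ₁ ∘ φ₂`, and every satisfying assignment of `φ₁ ∘ φ₂` arises this way; with
`proj_{v₁} φ₁ = proj_{u₂} φ₂` this yields the pre-implication properties. For the orbits: an
`O₁O₂`-mapping `f₁` of `φ₁` and an `O₂O₃`-mapping `f₂` of `φ₂` need not agree on the glued
variables, but `f₁ ∘ v₁` and `f₂ ∘ u₂` lie in the same orbit `O₂`, and `φ₁^A`, being pp-definable
in a first-order expansion of the canonical structure of `G`, is `G`-invariant. So `g ∘ f₁`
glues with `f₂` for a suitable `g ∈ G`, and it is still an `O₁O₂`-mapping.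
-/

open Function Set

namespace CSPPaper

/-- A relational signature: a type of relation symbols together with arities. -/
structure Sig where
  ι : Type
  arity : ι → ℕ

/-- A relational structure with signature `σ` on domain `A`. -/
structure StructOn (σ : Sig) (A : Type) where
  rel : ∀ i : σ.ι, Set (Fin (σ.arity i) → A)

variable {A : Type} {σ σ' : Sig}

/-! ### Homomorphisms and embeddings between relational structures -/

def IsHom {B : Type} (X : StructOn σ A) (Y : StructOn σ B) (h : A → B) : Prop :=
  ∀ i, ∀ t ∈ X.rel i, (h ∘ t) ∈ Y.rel i

def IsEmbeddingHom {B : Type} (X : StructOn σ A) (Y : StructOn σ B) (h : A → B) : Prop :=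
  Function.Injective h ∧ ∀ i, ∀ t : Fin (σ.arity i) → A, t ∈ X.rel i ↔ (h ∘ t) ∈ Y.rel i

def Embeds {B : Type} (X : StructOn σ A) (Y : StructOn σ B) : Prop :=
  ∃ h, IsEmbeddingHom X Y h

def Isomorphic {B : Type} (X : StructOn σ A) (Y : StructOn σ B) : Prop :=
  ∃ h, Function.Bijective h ∧ IsEmbeddingHom X Y h

/-- A finite `σ`-structure, with domain `Fin m` for some `m`. -/
def FinStructOn (σ : Sig) : Type := Σ m : ℕ, StructOn σ (Fin m)

/-- `Y` is a homomorphic image of `X`. -/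
def IsHomImage (X Y : FinStructOn σ) : Prop :=
  ∃ h : Fin X.1 → Fin Y.1, Function.Surjective h ∧
    ∀ i, Y.2.rel i = (fun t => h ∘ t) '' X.2.rel i

/-- The substructure of `X` induced on a subset `S` of its domain. -/
def inducedSub {B : Type} (X : StructOn σ B) (S : Set B) : StructOn σ ↥S :=
  ⟨fun i => {t | (fun j => (t j : B)) ∈ X.rel i}⟩

/-! ### Finite boundedness and finite duality -/

/-- `F` is a finite list of bounds witnessing finite boundedness of `S`. -/
def IsBoundWitness (S : StructOn σ A) (F : List (FinStructOn σ)) : Prop :=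
  ∀ C : FinStructOn σ, (∀ X ∈ F, ¬ Embeds X.2 C.2) → Embeds C.2 S

def FinitelyBounded (S : StructOn σ A) : Prop := ∃ F, IsBoundWitness S F

/-- `b = b_S`: the least possible size of the biggest structure in a witnessing family. -/
def IsBoundSize (S : StructOn σ A) (b : ℕ) : Prop :=
  IsLeast {b' : ℕ | ∃ F, IsBoundWitness S F ∧ ∀ X ∈ F, X.1 ≤ b'} b

/-- `S` has finite duality: it is finitely bounded with a witnessing family closed under
homomorphic images. -/
def FiniteDuality (S : StructOn σ A) : Prop :=
  ∃ F, IsBoundWitness S F ∧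
    ∀ X ∈ F, ∀ Y : FinStructOn σ, IsHomImage X Y → ∃ X' ∈ F, Isomorphic X'.2 Y.2

/-! ### Permutation groups -/

def orbitOf (G : Subgroup (Equiv.Perm A)) {n : ℕ} (t : Fin n → A) : Set (Fin n → A) :=
  {s | ∃ g ∈ G, s = ⇑g ∘ t}

def IsGOrbit (G : Subgroup (Equiv.Perm A)) {n : ℕ} (O : Set (Fin n → A)) : Prop :=
  ∃ t, O = orbitOf G t

def Oligomorphic (G : Subgroup (Equiv.Perm A)) : Prop :=
  ∀ n : ℕ, {O : Set (Fin n → A) | IsGOrbit G O}.Finite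

/-- `G` is `m`-transitive: one orbit on injective `m`-tuples. -/
def MTransitive (G : Subgroup (Equiv.Perm A)) (m : ℕ) : Prop :=
  ∀ s t : Fin m → A, Function.Injective s → Function.Injective t →
    ∃ g ∈ G, ⇑g ∘ s = t

/-- `G` is `k`-homogeneous: for every `ℓ ≥ k`, the orbit of every `ℓ`-tuple is determined
by the orbits of its `k`-subtuples. -/
def KHomogeneous (G : Subgroup (Equiv.Perm A)) (k : ℕ) : Prop :=
  ∀ ℓ : ℕ, k ≤ ℓ → ∀ s t : Fin ℓ → A,
    (∀ p : Fin k → Fin ℓ, orbitOf G (s ∘ p) = orbitOf G (t ∘ p)) →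
    orbitOf G s = orbitOf G t

/-- `G` has no `k`-algebraicity: the only fixed points of any pointwise stabilizer by
`k-1` elements are these elements themselves. -/
def NoKAlgebraicity (G : Subgroup (Equiv.Perm A)) (k : ℕ) : Prop :=
  ∀ (a : Fin (k - 1) → A) (b : A),
    (∀ g ∈ G, (∀ i, g (a i) = a i) → g b = b) → ∃ i, b = a i

def Neoliberal (G : Subgroup (Equiv.Perm A)) (k : ℕ) : Prop :=
  Oligomorphic G ∧ MTransitive G (k - 1) ∧ KHomogeneous G k ∧ NoKAlgebraicity G k

/-- The signature of the canonical `k`-ary structure of `G`: one `k`-ary symbol for each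
orbit of `k`-tuples. -/
def canonSig (G : Subgroup (Equiv.Perm A)) (k : ℕ) : Sig :=
  ⟨{O : Set (Fin k → A) // IsGOrbit G O}, fun _ => k⟩

/-- The canonical `k`-ary structure of `G`. -/
def canonStruct (G : Subgroup (Equiv.Perm A)) (k : ℕ) : StructOn (canonSig G k) A :=
  ⟨fun O => O.1⟩

/-! ### First-order definability (via Mathlib's model theory) -/

def sigLang (σ : Sig) : FirstOrder.Language :=
  { Functions := fun _ => Empty, Relations := fun n => {i : σ.ι // σ.arity i = n} }

def structureOf (S : StructOn σ A) : (sigLang σ).Structure A where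
  funMap := fun f _ => f.elim
  RelMap := fun r t => (fun j => t (Fin.cast r.2 j)) ∈ S.rel r.1

/-- `R` is first-order definable in the structure `S` (without parameters). -/
def foDefinable (S : StructOn σ A) {α : Type} (R : Set (α → A)) : Prop :=
  letI := structureOf S
  Set.Definable (∅ : Set A) (sigLang σ) R

/-- `T` is a first-order expansion of `S`: all relations of `S` are among those of `T`,
and every relation of `T` is first-order definable in `S`. -/
def IsFOExpansion (S : StructOn σ A) (T : StructOn σ' A) : Prop :=
  (∃ (j : σ.ι → σ'.ι) (h : ∀ i, σ'.arity (j i) = σ.arity i),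
    ∀ i, T.rel (j i) = {t | (t ∘ Fin.cast (h i).symm) ∈ S.rel i}) ∧
  ∀ i' : σ'.ι, foDefinable S (T.rel i')

/-! ### Primitive positive definability -/

/-- `R ⊆ A^α` is definable by a primitive positive formula over the signature of `S`:
there are existentially quantified extra variables `Fin m`, a finite list of atomic
constraints (relation symbols applied to variables) and a finite list of equality atoms,
whose satisfying assignments project to `R`. -/
def ppDefinable (S : StructOn σ A) {α : Type} (R : Set (α → A)) : Prop :=
  ∃ (m : ℕ) (atoms : List ((i : σ.ι) × (Fin (σ.arity i) → α ⊕ Fin m)))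
    (eqs : List ((α ⊕ Fin m) × (α ⊕ Fin m))),
    R = {t | ∃ e : Fin m → A,
      (∀ c ∈ atoms, (Sum.elim t e ∘ c.2) ∈ S.rel c.1) ∧
      ∀ p ∈ eqs, Sum.elim t e p.1 = Sum.elim t e p.2}

/-! ### Polymorphisms and automorphisms -/

def Preserves {n m : ℕ} (f : (Fin n → A) → A) (R : Set (Fin m → A)) : Prop :=
  ∀ ts : Fin n → Fin m → A, (∀ j, ts j ∈ R) → (fun i => f fun j => ts j i) ∈ R

def IsPolymorphism (S : StructOn σ A) {n : ℕ} (f : (Fin n → A) → A) : Prop :=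
  ∀ i, Preserves f (S.rel i)

def HasBinaryInjection (S : StructOn σ A) : Prop :=
  ∃ f : (Fin 2 → A) → A, IsPolymorphism S f ∧ Function.Injective f

def IsAuto (S : StructOn σ A) (g : A → A) : Prop :=
  Function.Bijective g ∧ ∀ i, ∀ t : Fin (σ.arity i) → A, t ∈ S.rel i ↔ (g ∘ t) ∈ S.rel i

def autOrbit (S : StructOn σ A) {n : ℕ} (t : Fin n → A) : Set (Fin n → A) :=
  {s | ∃ g, IsAuto S g ∧ s = g ∘ t}

def IsAutOrbit (S : StructOn σ A) {n : ℕ} (O : Set (Fin n → A)) : Prop :=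
  ∃ t, O = autOrbit S t

def OmegaCategorical (S : StructOn σ A) : Prop :=
  ∀ n : ℕ, {O : Set (Fin n → A) | IsAutOrbit S O}.Finite

def Oligopotent (S : StructOn σ A) {n : ℕ} (f : (Fin n → A) → A) : Prop :=
  ∀ B' : Set A, B'.Finite → ∃ α : A → A, IsAuto S α ∧ ∀ b ∈ B', f (fun _ => b) = α b

/-- `f` is a quasi near-unanimity operation. -/
def IsQNU {n : ℕ} (f : (Fin n → A) → A) : Prop :=
  ∀ a b : A, ∀ j : Fin n, f (Function.update (fun _ => b) j a) = f (fun _ => a)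

/-! ### CSP instances, minimality, relational width, strict width -/

structure Constraint (A V : Type) where
  scope : Set V
  val : Set (↥scope → A)

structure Instance (A V : Type) where
  cons : Set (Constraint A V)
  fin : cons.Finite

def Instance.Solution {V : Type} (I : Instance A V) (f : V → A) : Prop :=
  ∀ C ∈ I.cons, (fun x : ↥C.scope => f x.1) ∈ C.val

def Instance.NonTrivial {V : Type} (I : Instance A V) : Prop :=
  ∀ C ∈ I.cons, C.val.Nonempty

/-- Projection of a constraint onto a tuple of variables from its scope. -/
def Constraint.projOn {V : Type} {m : ℕ} (C : Constraint A V) (u : Fin m → V)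
    (h : ∀ j, u j ∈ C.scope) : Set (Fin m → A) :=
  {t | ∃ f ∈ C.val, ∀ j, t j = f ⟨u j, h j⟩}

/-- `(k,ℓ)`-minimality of an instance. -/
def Instance.Minimal {V : Type} (I : Instance A V) (k ℓ : ℕ) : Prop :=
  (∀ m ≤ ℓ, ∀ t : Fin m → V, ∃ C ∈ I.cons, ∀ j, t j ∈ C.scope) ∧
  (∀ m ≤ k, ∀ u : Fin m → V, ∀ C1 ∈ I.cons, ∀ C2 ∈ I.cons,
    ∀ (h1 : ∀ j, u j ∈ C1.scope) (h2 : ∀ j, u j ∈ C2.scope),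
      C1.projOn u h1 = C2.projOn u h2)

/-- `I` is an instance of `CSP(S)`: every constraint is, under some enumeration of its
scope, a relation of `S`. -/
def Instance.OfCSP {V : Type} (S : StructOn σ A) (I : Instance A V) : Prop :=
  ∀ C ∈ I.cons, ∃ (i : σ.ι) (e : Fin (σ.arity i) ≃ ↥C.scope),
    C.val = {f | (fun j => f (e j)) ∈ S.rel i}

/-- `I` is an instance of `CSP_inj(S)`: an instance of `CSP(S)` all of whose constraints
project onto pairs of distinct variables into the injective pairs. -/
def Instance.OfInjCSP {V : Type} (S : StructOn σ A) (I : Instance A V) : Prop :=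
  I.OfCSP S ∧ ∀ C ∈ I.cons, ∀ x y : ↥C.scope, x.1 ≠ y.1 → ∀ f ∈ C.val, f x ≠ f y

def Instance.EquivTo {V : Type} (I J : Instance A V) : Prop :=
  ∀ f : V → A, I.Solution f ↔ J.Solution f

/-- `S` has relational width `(k,ℓ)`. -/
def RelWidth (S : StructOn σ A) (k ℓ : ℕ) : Prop :=
  ∀ (V : Type), Finite V → ∀ I : Instance A V, I.NonTrivial → I.Minimal k ℓ →
    (∃ J : Instance A V, J.OfCSP S ∧ I.EquivTo J) → ∃ f, I.Solution f

/-- `CSP_inj(S)` has relational width `(k,ℓ)`. -/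
def RelWidthInj (S : StructOn σ A) (k ℓ : ℕ) : Prop :=
  ∀ (V : Type), Finite V → ∀ I : Instance A V, I.NonTrivial → I.Minimal k ℓ →
    (∃ J : Instance A V, J.OfInjCSP S ∧ I.EquivTo J) → ∃ f, I.Solution f

/-- `S` has strict width `k`. -/
def StrictWidth (S : StructOn σ A) (k : ℕ) : Prop :=
  ∃ ℓ : ℕ, k < ℓ ∧ ∀ (V : Type), Finite V → ∀ I : Instance A V,
    I.OfCSP S → I.Minimal k ℓ → ∀ (U : Set V) (g : ↥U → A),
      (∀ C ∈ I.cons, ∃ h ∈ C.val, ∀ (x : V) (hU : x ∈ U) (hC : x ∈ C.scope),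
        g ⟨x, hU⟩ = h ⟨x, hC⟩) →
      ∃ f, I.Solution f ∧ ∀ x : ↥U, f x.1 = g x

def BoundedStrictWidth (S : StructOn σ A) : Prop :=
  ∃ k : ℕ, 1 ≤ k ∧ StrictWidth S k

/-! ### Implications -/

/-- Projection of a set of assignments onto a tuple of variables. -/
def proj {V : Type} {k : ℕ} (u : Fin k → V) (Φ : Set (V → A)) : Set (Fin k → A) :=
  (fun f => f ∘ u) '' Φ

/-- The data of a pp-formula with distinguished tuples of variables `u`, `v`:
a variable set `V`, the set `Φ` of satisfying assignments, and the tuples. -/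
structure ImplData (A : Type) (k m : ℕ) where
  V : Type
  Φ : Set (V → A)
  u : Fin k → V
  v : Fin m → V

variable {k m n : ℕ}

/-- `φ` is a `(C,u,D,v)`-pre-implication in `S` (items (2)-(5) of the definition of an
implication, together with the ambient conditions of that definition). -/
structure ImplData.IsPreImplication (φ : ImplData A k m) (S : StructOn σ A)
    (C : Set (Fin k → A)) (D : Set (Fin m → A)) : Prop where
  finV : Finite φ.V
  u_inj : Function.Injective φ.u
  v_inj : Function.Injective φ.v
  hk : k < Nat.card φ.V
  hm : m < Nat.card φ.V
  cover : Set.range φ.u ∪ Set.range φ.v = Set.univ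
  C_ne : C.Nonempty
  D_ne : D.Nonempty
  C_pp : ppDefinable S C
  D_pp : ppDefinable S D
  Φ_pp : ppDefinable S φ.Φ
  C_proper : C ⊂ proj φ.u φ.Φ
  D_proper : D ⊂ proj φ.v φ.Φ
  forward : ∀ f ∈ φ.Φ, f ∘ φ.u ∈ C → f ∘ φ.v ∈ D
  surj : ∀ a ∈ D, ∃ f ∈ φ.Φ, f ∘ φ.u ∈ C ∧ f ∘ φ.v = a

/-- `φ` is a `(C,u,D,v)`-implication in `S`. -/
def ImplData.IsImplication (φ : ImplData A k m) (S : StructOn σ A)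
    (C : Set (Fin k → A)) (D : Set (Fin m → A)) : Prop :=
  φ.IsPreImplication S C D ∧ ∀ x y : φ.V, x ≠ y → ∃ f ∈ φ.Φ, f x ≠ f y

/-- The implication `φ` is injective: all its satisfying assignments are injective. -/
def ImplData.Injective' (φ : ImplData A k m) : Prop :=
  ∀ f ∈ φ.Φ, Function.Injective f

/-- `f` is an `OP`-mapping of `φ`. -/
def ImplData.IsOPMap (φ : ImplData A k m) (O : Set (Fin k → A)) (P : Set (Fin m → A))
    (f : φ.V → A) : Prop :=
  f ∈ φ.Φ ∧ f ∘ φ.u ∈ O ∧ f ∘ φ.v ∈ P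

/-- Restriction of `φ` to its injective satisfying assignments. -/
def ImplData.injRestrict (φ : ImplData A k m) : ImplData A k m :=
  ⟨φ.V, {f ∈ φ.Φ | Function.Injective f}, φ.u, φ.v⟩

/-! ### Composition of implications -/

/-- The identification of the second distinguished tuple of `φ1` with the first
distinguished tuple of `φ2` (i.e. the renaming `v1 = u2` with no other shared
variables). -/
def compRel (φ1 : ImplData A k m) (φ2 : ImplData A m n) :
    (φ1.V ⊕ φ2.V) → (φ1.V ⊕ φ2.V) → Prop :=
  fun x y => ∃ i : Fin m, x = Sum.inl (φ1.v i) ∧ y = Sum.inr (φ2.u i)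

/-- The composition `φ1 ∘ φ2`: the conjunction `φ1 ∧ φ2` (with `v1` renamed to `u2`),
with all variables not among the entries of `u1` and `v2` existentially quantified. -/
def ImplData.comp (φ1 : ImplData A k m) (φ2 : ImplData A m n) : ImplData A k n where
  V := {q : Quot (compRel φ1 φ2) //
        q ∈ Set.range (fun x => Quot.mk (compRel φ1 φ2) (Sum.inl (φ1.u x))) ∪
            Set.range (fun x => Quot.mk (compRel φ1 φ2) (Sum.inr (φ2.v x)))}
  Φ := {f | ∃ h : Quot (compRel φ1 φ2) → A,
        (fun x => h (Quot.mk (compRel φ1 φ2) (Sum.inl x))) ∈ φ1.Φ ∧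
        (fun x => h (Quot.mk (compRel φ1 φ2) (Sum.inr x))) ∈ φ2.Φ ∧
        ∀ q, f q = h q.1}
  u := fun i => ⟨Quot.mk (compRel φ1 φ2) (Sum.inl (φ1.u i)),
        Set.mem_union_left _ (Set.mem_range_self i)⟩
  v := fun i => ⟨Quot.mk (compRel φ1 φ2) (Sum.inr (φ2.v i)),
        Set.mem_union_right _ (Set.mem_range_self i)⟩

/-- `ψ^{∘n}`: the `n`-fold composition of `ψ` with itself (`ψ` appears `n` times). -/
def ImplData.pow (ψ : ImplData A k k) : ℕ → ImplData A k k
  | 0 => ψ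
  | 1 => ψ
  | (n + 2) => (ImplData.pow ψ (n + 1)).comp ψ

/-! ### The digraph of an implication -/

/-- The vertex set `Vert(E)`: orbits under `Aut(B)` contained in `E`. -/
def VertOf (Bstr : StructOn σ A) {k : ℕ} (E : Set (Fin k → A)) : Set (Set (Fin k → A)) :=
  {O | IsAutOrbit Bstr O ∧ O ⊆ E}

/-- The arc relation of the digraph `B_φ` on `Vert(E)`. -/
def ArcOn (Bstr : StructOn σ A) (φ : ImplData A k k) (E : Set (Fin k → A))
    (O P : Set (Fin k → A)) : Prop :=
  O ∈ VertOf Bstr E ∧ P ∈ VertOf Bstr E ∧ ∃ f, φ.IsOPMap O P f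

/-- `Scc` is a strongly connected component of `B_φ`. -/
def IsSCC (Bstr : StructOn σ A) (φ : ImplData A k k) (E : Set (Fin k → A))
    (Scc : Set (Set (Fin k → A))) : Prop :=
  Scc ⊆ VertOf Bstr E ∧
  (∀ O ∈ Scc, ∀ P ∈ Scc, Relation.TransGen (ArcOn Bstr φ E) O P) ∧
  ∀ S' : Set (Set (Fin k → A)), Scc ⊆ S' → S' ⊆ VertOf Bstr E →
    (∀ O ∈ S', ∀ P ∈ S', Relation.TransGen (ArcOn Bstr φ E) O P) → S' = Scc

def IsSink (Bstr : StructOn σ A) (φ : ImplData A k k) (E : Set (Fin k → A))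
    (Scc : Set (Set (Fin k → A))) : Prop :=
  ∀ O ∈ Scc, ∀ P, ArcOn Bstr φ E O P → P ∈ Scc

def IsSource (Bstr : StructOn σ A) (φ : ImplData A k k) (E : Set (Fin k → A))
    (Scc : Set (Set (Fin k → A))) : Prop :=
  ∀ P ∈ Scc, ∀ O, ArcOn Bstr φ E O P → O ∈ Scc

/-- `φ` is a complete implication (with respect to the ground structure `Bstr`). -/
def IsComplete (Bstr : StructOn σ A) (φ : ImplData A k k) : Prop :=
  proj φ.u φ.Φ = proj φ.v φ.Φ ∧
  Nat.card (φ.comp φ).V = Nat.card φ.V ∧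
  (∀ i : Fin k, φ.u i ∈ Set.range φ.v → φ.u i = φ.v i) ∧
  ∀ Scc, IsSCC Bstr φ (proj φ.u φ.Φ) Scc →
    ∀ O ∈ Scc, ∀ P ∈ Scc, ArcOn Bstr φ (proj φ.u φ.Φ) O P

/-! ### The injective implication graph -/

/-- `(C1, C)` (given as `(P.1, P.2)`) is a vertex of the `k`-ary injective implication
graph of `S`. -/
def InjVertex (S : StructOn σ A) (k : ℕ) (P : Set (Fin k → A) × Set (Fin k → A)) : Prop :=
  P.2.Nonempty ∧ P.2 ⊂ P.1 ∧ ppDefinable S P.1 ∧ ppDefinable S P.2 ∧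
    ∀ t ∈ P.2, Function.Injective t

/-- Arc of the `k`-ary injective implication graph of `S`. -/
def InjImplArc (S : StructOn σ A) (k : ℕ)
    (P Q : Set (Fin k → A) × Set (Fin k → A)) : Prop :=
  InjVertex S k P ∧ InjVertex S k Q ∧ P ≠ Q ∧
  ∃ φ : ImplData A k k, φ.IsImplication S P.2 Q.2 ∧ φ.Injective' ∧
    proj φ.u φ.Φ = P.1 ∧ proj φ.v φ.Φ = Q.1

/-- `S` is implicationally simple on injective instances: the `k`-ary injective
implication graph of `S` is acyclic (contains no directed cycle). -/
def ImplSimpleInj (S : StructOn σ A) (k : ℕ) : Prop :=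
  ¬ ∃ (nn : ℕ) (p : ℕ → Set (Fin k → A) × Set (Fin k → A)),
      0 < nn ∧ p 0 = p nn ∧ ∀ i < nn, InjImplArc S k (p i) (p (i + 1))

/-! ### Critical formulas -/

/-- `φ` is critical in `S` over `(C, D, φ.u, φ.v)`. -/
structure IsCritical (S : StructOn σ A) (φ : ImplData A k k)
    (C D : Set (Fin k → A)) : Prop where
  disj : Disjoint C D
  C_inj : ∀ t ∈ C, Function.Injective t
  D_inj : ∀ t ∈ D, Function.Injective t
  D_pp : ppDefinable S D
  card_V : Nat.card φ.V = k + 1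
  kpos : 0 < k
  u0 : φ.u ⟨0, kpos⟩ ∉ Set.range φ.u ∩ Set.range φ.v
  v0 : φ.v ⟨0, kpos⟩ ∉ Set.range φ.u ∩ Set.range φ.v
  impl : φ.IsImplication S C C
  D_proper_u : D ⊂ proj φ.u φ.Φ
  proju_inj : ∀ t ∈ proj φ.u φ.Φ, Function.Injective t
  D_proper_v : D ⊂ proj φ.v φ.Φ
  projv_inj : ∀ t ∈ proj φ.v φ.Φ, Function.Injective t
  surjD : ∀ a ∈ D, ∃ f ∈ φ.Φ, f ∘ φ.u ∈ D ∧ f ∘ φ.v = a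

/-! ### Boolean combinations -/

inductive BoolComb {β : Type} (basic : Set (Set β)) : Set β → Prop
  | of (s : Set β) (hs : s ∈ basic) : BoolComb basic s
  | univ : BoolComb basic Set.univ
  | compl (s : Set β) : BoolComb basic s → BoolComb basic sᶜ
  | inter (s t : Set β) : BoolComb basic s → BoolComb basic t → BoolComb basic (s ∩ t)

def PPSat (S : StructOn σ A) {X : Type} (atoms : List ((i : σ.ι) × (Fin (σ.arity i) → X)))
    (eqs : List (X × X)) (s : X → A) : Prop :=
  (∀ c ∈ atoms, s ∘ c.2 ∈ S.rel c.1) ∧ ∀ p ∈ eqs, s p.1 = s p.2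

section PPDefinable

variable {S : StructOn σ A}

lemma ppDefinable_iff {α : Type} {R : Set (α → A)} :
    ppDefinable S R ↔ ∃ (m : ℕ) (atoms : List ((i : σ.ι) × (Fin (σ.arity i) → α ⊕ Fin m)))
      (eqs : List ((α ⊕ Fin m) × (α ⊕ Fin m))),
      R = {t | ∃ e : Fin m → A, PPSat S atoms eqs (Sum.elim t e)} :=
  Iff.rfl

lemma ppSat_map {X Y : Type} (ρ : X → Y) (atoms : List ((i : σ.ι) × (Fin (σ.arity i) → X)))
    (eqs : List (X × X)) (s : Y → A) :
    PPSat S (atoms.map fun c => ⟨c.1, ρ ∘ c.2⟩) (eqs.map (Prod.map ρ ρ)) s ↔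
      PPSat S atoms eqs (s ∘ ρ) := by
  simp only [PPSat, List.forall_mem_map, Prod.map_fst, Prod.map_snd, Function.comp_assoc]
  rfl

lemma ppSat_append {X : Type} (a₁ a₂ : List ((i : σ.ι) × (Fin (σ.arity i) → X)))
    (q₁ q₂ : List (X × X)) (s : X → A) :
    PPSat S (a₁ ++ a₂) (q₁ ++ q₂) s ↔ PPSat S a₁ q₁ s ∧ PPSat S a₂ q₂ s := by
  simp only [PPSat, List.mem_append, or_imp, forall_and]
  tauto

lemma PPSat.comp_of_isHom {X : Type} {atoms : List ((i : σ.ι) × (Fin (σ.arity i) → X))}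
    {eqs : List (X × X)} {s : X → A} (hs : PPSat S atoms eqs s) {g : A → A} (hg : IsHom S S g) :
    PPSat S atoms eqs (g ∘ s) :=
  ⟨fun c hc => hg c.1 _ (hs.1 c hc), fun p hp => congrArg g (hs.2 p hp)⟩

lemma ppDefinable_of_finite {α W : Type} [Finite W] {R : Set (α → A)}
    (atoms : List ((i : σ.ι) × (Fin (σ.arity i) → α ⊕ W))) (eqs : List ((α ⊕ W) × (α ⊕ W)))
    (hR : R = {t | ∃ e : W → A, PPSat S atoms eqs (Sum.elim t e)}) : ppDefinable S R := by
  obtain ⟨N, ⟨ε⟩⟩ := Finite.exists_equiv_fin W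
  rw [ppDefinable_iff]
  refine ⟨N, atoms.map fun c => ⟨c.1, Sum.map id ε ∘ c.2⟩, eqs.map (Prod.map (Sum.map id ε)
    (Sum.map id ε)), ?_⟩
  subst hR
  ext t
  simp only [ppSat_map, Sum.elim_comp_map, Function.comp_id, Set.mem_ofPred_eq]
  exact ⟨fun ⟨e, he⟩ => ⟨e ∘ ε.symm, by simpa [Function.comp_assoc] using he⟩,
    fun ⟨e, he⟩ => ⟨e ∘ ε, he⟩⟩

lemma ppDefinable.preimage_comp {α β : Type} {R : Set (α → A)} (hR : ppDefinable S R)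
    (g : α → β) : ppDefinable S {t : β → A | t ∘ g ∈ R} := by
  obtain ⟨m, atoms, eqs, rfl⟩ := ppDefinable_iff.1 hR
  rw [ppDefinable_iff]
  refine ⟨m, atoms.map fun c => ⟨c.1, Sum.map g id ∘ c.2⟩,
    eqs.map (Prod.map (Sum.map g id) (Sum.map g id)), ?_⟩
  ext t
  simp only [ppSat_map, Sum.elim_comp_map, Function.comp_id, Set.mem_ofPred_eq]

lemma ppDefinable.inter {α : Type} {R₁ R₂ : Set (α → A)} (h₁ : ppDefinable S R₁)
    (h₂ : ppDefinable S R₂) : ppDefinable S (R₁ ∩ R₂) := by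
  obtain ⟨m₁, a₁, q₁, rfl⟩ := ppDefinable_iff.1 h₁
  obtain ⟨m₂, a₂, q₂, rfl⟩ := ppDefinable_iff.1 h₂
  let ρ₁ : α ⊕ Fin m₁ → α ⊕ (Fin m₁ ⊕ Fin m₂) := Sum.map id Sum.inl
  let ρ₂ : α ⊕ Fin m₂ → α ⊕ (Fin m₁ ⊕ Fin m₂) := Sum.map id Sum.inr
  refine ppDefinable_of_finite
    (a₁.map (fun c => ⟨c.1, ρ₁ ∘ c.2⟩) ++ a₂.map fun c => ⟨c.1, ρ₂ ∘ c.2⟩) (q₁.map (Prod.map ρ₁ ρ₁) ++ q₂.map (Prod.map ρ₂ ρ₂)) ?_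
  ext t
  simp only [ppSat_append, ppSat_map, ρ₁, ρ₂, Sum.elim_comp_map, Function.comp_id,
    Set.mem_inter_iff, Set.mem_ofPred_eq]
  exact ⟨fun ⟨⟨e₁, h₁⟩, ⟨e₂, h₂⟩⟩ => ⟨Sum.elim e₁ e₂, h₁, h₂⟩,
    fun ⟨e, h₁, h₂⟩ => ⟨⟨_, h₁⟩, ⟨_, h₂⟩⟩⟩

lemma ppDefinable.image_comp {α β : Type} [Finite α] [Finite β] {R : Set (β → A)}
    (hR : ppDefinable S R) (g : α → β) : ppDefinable S ((fun h => h ∘ g) '' R) := by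
  have := Fintype.ofFinite α
  obtain ⟨m, atoms, eqs, rfl⟩ := ppDefinable_iff.1 hR
  let ρ : β ⊕ Fin m → α ⊕ (β ⊕ Fin m) := Sum.inr
  refine ppDefinable_of_finite (atoms.map (fun c => ⟨c.1, ρ ∘ c.2⟩) ++ [])
    (eqs.map (Prod.map ρ ρ) ++ Finset.univ.toList.map fun x => (Sum.inl x, ρ (Sum.inl (g x)))) ?_
  ext t
  simp only [ppSat_append, ppSat_map, ρ, Sum.elim_comp_inr]
  have hEqs : ∀ e : β ⊕ Fin m → A, PPSat S []
      (Finset.univ.toList.map fun x => (Sum.inl x, Sum.inr (Sum.inl (g x)))) (Sum.elim t e) ↔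
      ∀ x, t x = e (Sum.inl (g x)) := by
    simp [PPSat]
  simp only [hEqs, Set.mem_image, Set.mem_ofPred_eq]
  constructor
  · rintro ⟨h, ⟨e, he⟩, rfl⟩
    exact ⟨Sum.elim h e, he, fun x => rfl⟩
  · rintro ⟨e, he, ht⟩
    exact ⟨e ∘ Sum.inl, ⟨e ∘ Sum.inr, by rwa [Sum.elim_comp_inl_inr]⟩,
      funext fun x => (ht x).symm⟩

end PPDefinable

section Invariance

lemma ppDefinable.comp_mem_of_isHom {S : StructOn σ A} {α : Type} {R : Set (α → A)}
    (hR : ppDefinable S R) {g : A → A} (hg : IsHom S S g) {f : α → A} (hf : f ∈ R) :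
    g ∘ f ∈ R := by
  obtain ⟨m, atoms, eqs, rfl⟩ := ppDefinable_iff.1 hR
  obtain ⟨e, he⟩ := hf
  exact ⟨g ∘ e, by simpa only [← Sum.comp_elim] using PPSat.comp_of_isHom he hg⟩

lemma foDefinable.comp_mem_of_isAuto {S : StructOn σ A} {α : Type} {R : Set (α → A)}
    (hR : foDefinable S R) {g : A → A} (hg : IsAuto S g) {f : α → A} (hf : f ∈ R) :
    g ∘ f ∈ R := by
  let := structureOf S
  obtain ⟨φ, rfl⟩ := Set.empty_definable_iff.1 hR
  let e : FirstOrder.Language.Equiv (sigLang σ) A A :=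
    { toEquiv := Equiv.ofBijective g hg.1
      map_fun' := fun f => f.elim
      map_rel' := fun r x => (hg.2 r.1 fun j => x (Fin.cast r.2 j)).symm }
  exact (FirstOrder.Language.StrongHomClass.realize_formula e φ).2 hf

lemma IsFOExpansion.isHom_of_isAuto {S : StructOn σ A} {T : StructOn σ' A}
    (hT : IsFOExpansion S T) {g : A → A} (hg : IsAuto S g) : IsHom T T g :=
  fun i _ ht => (hT.2 i).comp_mem_of_isAuto hg ht

lemma mem_orbitOf_self (G : Subgroup (Equiv.Perm A)) {n : ℕ} (t : Fin n → A) :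
    t ∈ orbitOf G t :=
  ⟨1, G.one_mem, rfl⟩

lemma IsGOrbit.comp_mem_iff {G : Subgroup (Equiv.Perm A)} {n : ℕ} {O : Set (Fin n → A)}
    (hO : IsGOrbit G O) {g : Equiv.Perm A} (hg : g ∈ G) {t : Fin n → A} :
    ⇑g ∘ t ∈ O ↔ t ∈ O := by
  obtain ⟨t₀, rfl⟩ := hO
  constructor
  · rintro ⟨h, hh, he⟩
    refine ⟨g⁻¹ * h, G.mul_mem (G.inv_mem hg) hh, ?_⟩
    rw [Equiv.Perm.coe_mul, Function.comp_assoc, ← he, ← Function.comp_assoc,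
      Equiv.Perm.inv_def, Equiv.symm_comp_self, Function.id_comp]
  · rintro ⟨h, hh, rfl⟩
    exact ⟨g * h, G.mul_mem hg hh, rfl⟩

lemma IsGOrbit.exists_comp_eq {G : Subgroup (Equiv.Perm A)} {n : ℕ} {O : Set (Fin n → A)}
    (hO : IsGOrbit G O) {s t : Fin n → A} (hs : s ∈ O) (ht : t ∈ O) :
    ∃ g ∈ G, ⇑g ∘ s = t := by
  obtain ⟨t₀, rfl⟩ := hO
  obtain ⟨g, hg, rfl⟩ := hs
  obtain ⟨h, hh, rfl⟩ := ht
  refine ⟨h * g⁻¹, G.mul_mem hh (G.inv_mem hg), ?_⟩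
  funext i
  simp

lemma isAuto_canonStruct {G : Subgroup (Equiv.Perm A)} {k : ℕ} {g : Equiv.Perm A}
    (hg : g ∈ G) : IsAuto (canonStruct G k) g :=
  ⟨g.bijective, fun O _ => (O.2.comp_mem_iff hg).symm⟩

lemma ppDefinable.comp_mem_of_mem_subgroup {G : Subgroup (Equiv.Perm A)} {k : ℕ}
    {T : StructOn σ' A} (hT : IsFOExpansion (canonStruct G k) T) {α : Type} {R : Set (α → A)}
    (hR : ppDefinable T R) {g : Equiv.Perm A} (hg : g ∈ G) {f : α → A} (hf : f ∈ R) :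
    ⇑g ∘ f ∈ R :=
  hR.comp_mem_of_isHom (hT.isHom_of_isAuto (isAuto_canonStruct hg)) hf

end Invariance

section Comp

variable (φ₁ : ImplData A k m) (φ₂ : ImplData A m n)

lemma ImplData.exists_mem_comp_of_agree {f₁ : φ₁.V → A} {f₂ : φ₂.V → A} (h₁ : f₁ ∈ φ₁.Φ)
    (h₂ : f₂ ∈ φ₂.Φ) (h : f₁ ∘ φ₁.v = f₂ ∘ φ₂.u) :
    ∃ f ∈ (φ₁.comp φ₂).Φ, f ∘ (φ₁.comp φ₂).u = f₁ ∘ φ₁.u ∧ f ∘ (φ₁.comp φ₂).v = f₂ ∘ φ₂.v := by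
  let glued : Quot (compRel φ₁ φ₂) → A :=
    Quot.lift (Sum.elim f₁ f₂) (by rintro _ _ ⟨i, rfl, rfl⟩; exact congrFun h i)
  exact ⟨fun q => glued q.1, ⟨glued, h₁, h₂, fun _ => rfl⟩, rfl, rfl⟩

lemma ImplData.exists_of_mem_comp {f : (φ₁.comp φ₂).V → A} (hf : f ∈ (φ₁.comp φ₂).Φ) :
    ∃ f₁ ∈ φ₁.Φ, ∃ f₂ ∈ φ₂.Φ, f₁ ∘ φ₁.v = f₂ ∘ φ₂.u ∧
      f ∘ (φ₁.comp φ₂).u = f₁ ∘ φ₁.u ∧ f ∘ (φ₁.comp φ₂).v = f₂ ∘ φ₂.v := by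
  obtain ⟨h, hh₁, hh₂, hf⟩ := hf
  exact ⟨_, hh₁, _, hh₂, funext fun i => congrArg h (Quot.sound ⟨i, rfl, rfl⟩),
    funext fun _ => hf _, funext fun _ => hf _⟩

lemma ImplData.proj_comp_u (hproj : proj φ₁.v φ₁.Φ = proj φ₂.u φ₂.Φ) :
    proj (φ₁.comp φ₂).u (φ₁.comp φ₂).Φ = proj φ₁.u φ₁.Φ := by
  refine Set.Subset.antisymm ?_ ?_
  · rintro _ ⟨f, hf, rfl⟩
    obtain ⟨f₁, hf₁, -, -, -, hu, -⟩ := φ₁.exists_of_mem_comp φ₂ hf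
    exact ⟨f₁, hf₁, hu.symm⟩
  · rintro _ ⟨f₁, hf₁, rfl⟩
    obtain ⟨f₂, hf₂, hagree⟩ : f₁ ∘ φ₁.v ∈ proj φ₂.u φ₂.Φ := hproj ▸ ⟨f₁, hf₁, rfl⟩
    obtain ⟨f, hf, hu, -⟩ := φ₁.exists_mem_comp_of_agree φ₂ hf₁ hf₂ hagree.symm
    exact ⟨f, hf, hu⟩

lemma ImplData.proj_comp_v (hproj : proj φ₁.v φ₁.Φ = proj φ₂.u φ₂.Φ) :
    proj (φ₁.comp φ₂).v (φ₁.comp φ₂).Φ = proj φ₂.v φ₂.Φ := by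
  refine Set.Subset.antisymm ?_ ?_
  · rintro _ ⟨f, hf, rfl⟩
    obtain ⟨-, -, f₂, hf₂, -, -, hv⟩ := φ₁.exists_of_mem_comp φ₂ hf
    exact ⟨f₂, hf₂, hv.symm⟩
  · rintro _ ⟨f₂, hf₂, rfl⟩
    obtain ⟨f₁, hf₁, hagree⟩ : f₂ ∘ φ₂.u ∈ proj φ₁.v φ₁.Φ := hproj.symm ▸ ⟨f₂, hf₂, rfl⟩
    obtain ⟨f, hf, -, hv⟩ := φ₁.exists_mem_comp_of_agree φ₂ hf₁ hf₂ hagree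
    exact ⟨f, hf, hv⟩

lemma ImplData.ppDefinable_comp_Φ {S : StructOn σ A} [Finite φ₁.V] [Finite φ₂.V]
    (h₁ : ppDefinable S φ₁.Φ) (h₂ : ppDefinable S φ₂.Φ) : ppDefinable S (φ₁.comp φ₂).Φ := by
  have : (φ₁.comp φ₂).Φ = (fun h => h ∘ Subtype.val) ''
      ({h | h ∘ (Quot.mk _ ∘ Sum.inl) ∈ φ₁.Φ} ∩ {h | h ∘ (Quot.mk _ ∘ Sum.inr) ∈ φ₂.Φ}) := by
    ext f
    exact ⟨fun ⟨h, h₁, h₂, hf⟩ => ⟨h, ⟨h₁, h₂⟩, funext fun q => (hf q).symm⟩,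
      fun ⟨h, ⟨h₁, h₂⟩, hf⟩ => ⟨h, h₁, h₂, fun q => hf ▸ rfl⟩⟩
  rw [this]
  have : Finite (Quot (compRel φ₁ φ₂)) := Quot.finite _
  have : Finite (φ₁.comp φ₂).V := Subtype.finite
  exact ((h₁.preimage_comp _).inter (h₂.preimage_comp _)).image_comp _

end Comp

section Collapse

variable {φ₁ : ImplData A k m} {φ₂ : ImplData A m n}

/-- A retraction of the gluing onto `φ₁.V ⊕ φ₂.V`; it shows that the gluing identifies no
variables besides `v₁ i ~ u₂ i`. -/
noncomputable def compCollapse (hv : Injective φ₁.v) : Quot (compRel φ₁ φ₂) → φ₁.V ⊕ φ₂.V :=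
  Quot.lift (Sum.elim (extend φ₁.v (Sum.inr ∘ φ₂.u) Sum.inl) Sum.inr) <| by
    rintro _ _ ⟨i, rfl, rfl⟩
    exact hv.extend_apply _ _ i

lemma compCollapse_mk_inr (hv : Injective φ₁.v) (b : φ₂.V) :
    compCollapse hv (Quot.mk (compRel φ₁ φ₂) (Sum.inr b)) = Sum.inr b :=
  rfl

lemma compCollapse_mk_inl_v (hv : Injective φ₁.v) (i : Fin m) :
    compCollapse hv (Quot.mk (compRel φ₁ φ₂) (Sum.inl (φ₁.v i))) = Sum.inr (φ₂.u i) :=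
  hv.extend_apply _ _ i

lemma compCollapse_mk_inl_of_notMem (hv : Injective φ₁.v) {a : φ₁.V} (ha : a ∉ range φ₁.v) :
    compCollapse hv (Quot.mk (compRel φ₁ φ₂) (Sum.inl a)) = Sum.inl a :=
  extend_apply' _ _ _ ha

lemma compRel_mk_inl_injective (hv : Injective φ₁.v) (hu : Injective φ₂.u) :
    Injective fun a : φ₁.V => Quot.mk (compRel φ₁ φ₂) (Sum.inl a) := by
  intro a b hab
  have h := congrArg (compCollapse hv) hab
  by_cases ha : a ∈ range φ₁.v <;> by_cases hb : b ∈ range φ₁.v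
  · obtain ⟨i, rfl⟩ := ha
    obtain ⟨j, rfl⟩ := hb
    simp only [compCollapse_mk_inl_v, Sum.inr.injEq] at h
    rw [hu h]
  · obtain ⟨i, rfl⟩ := ha
    simp [compCollapse_mk_inl_v, compCollapse_mk_inl_of_notMem hv hb] at h
  · obtain ⟨j, rfl⟩ := hb
    simp [compCollapse_mk_inl_v, compCollapse_mk_inl_of_notMem hv ha] at h
  · simpa [compCollapse_mk_inl_of_notMem hv ha, compCollapse_mk_inl_of_notMem hv hb] using h

lemma compRel_mk_inr_injective (hv : Injective φ₁.v) :
    Injective fun b : φ₂.V => Quot.mk (compRel φ₁ φ₂) (Sum.inr b) :=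
  fun _ _ hab => Sum.inr_injective (congrArg (compCollapse hv) hab)

lemma compRel_mk_inl_ne_mk_inr (hv : Injective φ₁.v) {a : φ₁.V} (ha : a ∉ range φ₁.v) (b : φ₂.V) :
    Quot.mk (compRel φ₁ φ₂) (Sum.inl a) ≠ Quot.mk _ (Sum.inr b) := fun h => by
  simpa [compCollapse_mk_inl_of_notMem hv ha, compCollapse_mk_inr] using
    congrArg (compCollapse hv) h

lemma compRel_mk_inr_ne_mk_inl (hv : Injective φ₁.v) {b : φ₂.V} (hb : b ∉ range φ₂.u) (a : φ₁.V) :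
    Quot.mk (compRel φ₁ φ₂) (Sum.inr b) ≠ Quot.mk _ (Sum.inl a) := fun h => by
  have h := congrArg (compCollapse hv) h
  by_cases ha : a ∈ range φ₁.v
  · obtain ⟨i, rfl⟩ := ha
    rw [compCollapse_mk_inr, compCollapse_mk_inl_v] at h
    exact hb ⟨i, (Sum.inr_injective h).symm⟩
  · rw [compCollapse_mk_inr, compCollapse_mk_inl_of_notMem hv ha] at h
    exact Sum.inr_ne_inl h

end Collapse

lemma exists_notMem_range_of_lt_natCard {V : Type} (f : Fin k → V) (h : k < Nat.card V) :
    ∃ x, x ∉ range f := by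
  by_contra! hf
  have := Nat.card_le_card_of_surjective f hf
  simp only [Nat.card_eq_fintype_card, Fintype.card_fin] at this
  omega

lemma lt_natCard_of_injective_of_notMem {V : Type} [Finite V] {f : Fin k → V}
    (hf : Injective f) {x : V} (hx : x ∉ range f) : k < Nat.card V := by
  have := Fintype.ofFinite V
  simpa [Nat.card_eq_fintype_card] using Fintype.card_lt_of_injective_of_notMem f hf hx

namespace ImplData.IsPreImplication

variable {S : StructOn σ A} {φ : ImplData A k m} {C : Set (Fin k → A)} {D : Set (Fin m → A)}

lemma exists_u_notMem_range_v (h : φ.IsPreImplication S C D) : ∃ i, φ.u i ∉ range φ.v := by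
  obtain ⟨x, hx⟩ := exists_notMem_range_of_lt_natCard φ.v h.hm
  obtain ⟨i, rfl⟩ := ((h.cover ▸ mem_univ x : x ∈ range φ.u ∪ range φ.v)).resolve_right hx
  exact ⟨i, hx⟩

lemma exists_v_notMem_range_u (h : φ.IsPreImplication S C D) : ∃ j, φ.v j ∉ range φ.u := by
  obtain ⟨x, hx⟩ := exists_notMem_range_of_lt_natCard φ.u h.hk
  obtain ⟨j, rfl⟩ := ((h.cover ▸ mem_univ x : x ∈ range φ.u ∪ range φ.v)).resolve_left hx
  exact ⟨j, hx⟩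

end ImplData.IsPreImplication

section CompPreImplication

variable {S : StructOn σ A} {φ₁ : ImplData A k m} {φ₂ : ImplData A m n}
  {C : Set (Fin k → A)} {D : Set (Fin m → A)} {E : Set (Fin n → A)}

lemma ImplData.IsPreImplication.comp_forward (h₁ : φ₁.IsPreImplication S C D)
    (h₂ : φ₂.IsPreImplication S D E) {f : (φ₁.comp φ₂).V → A} (hf : f ∈ (φ₁.comp φ₂).Φ)
    (hC : f ∘ (φ₁.comp φ₂).u ∈ C) : f ∘ (φ₁.comp φ₂).v ∈ E := by
  obtain ⟨f₁, hf₁, f₂, hf₂, hagree, hu, hv⟩ := φ₁.exists_of_mem_comp φ₂ hf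
  rw [hv]
  refine h₂.forward f₂ hf₂ ?_
  rw [← hagree]
  exact h₁.forward f₁ hf₁ (hu ▸ hC)

lemma ImplData.IsPreImplication.comp_surj (h₁ : φ₁.IsPreImplication S C D)
    (h₂ : φ₂.IsPreImplication S D E) {a : Fin n → A} (ha : a ∈ E) :
    ∃ f ∈ (φ₁.comp φ₂).Φ, f ∘ (φ₁.comp φ₂).u ∈ C ∧ f ∘ (φ₁.comp φ₂).v = a := by
  obtain ⟨f₂, hf₂, hD, rfl⟩ := h₂.surj a ha
  obtain ⟨f₁, hf₁, hC, hagree⟩ := h₁.surj _ hD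
  obtain ⟨f, hf, hu, hv⟩ := φ₁.exists_mem_comp_of_agree φ₂ hf₁ hf₂ hagree
  exact ⟨f, hf, hu ▸ hC, hv⟩

theorem ImplData.IsPreImplication.comp (h₁ : φ₁.IsPreImplication S C D)
    (h₂ : φ₂.IsPreImplication S D E) (hproj : proj φ₁.v φ₁.Φ = proj φ₂.u φ₂.Φ) :
    (φ₁.comp φ₂).IsPreImplication S C E := by
  have := h₁.finV
  have := h₂.finV
  have : Finite (Quot (compRel φ₁ φ₂)) := Quot.finite _
  have hfin : Finite (φ₁.comp φ₂).V := Subtype.finite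
  have hu : Injective (φ₁.comp φ₂).u := fun _ _ h =>
    h₁.u_inj (compRel_mk_inl_injective h₁.v_inj h₂.u_inj (congrArg Subtype.val h))
  have hv : Injective (φ₁.comp φ₂).v := fun _ _ h =>
    h₂.v_inj (compRel_mk_inr_injective h₁.v_inj (congrArg Subtype.val h))
  obtain ⟨i, hi⟩ := h₁.exists_u_notMem_range_v
  obtain ⟨j, hj⟩ := h₂.exists_v_notMem_range_u
  have hi' : (φ₁.comp φ₂).u i ∉ range (φ₁.comp φ₂).v := fun ⟨j', h⟩ =>
    compRel_mk_inl_ne_mk_inr h₁.v_inj hi _ (congrArg Subtype.val h).symm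
  have hj' : (φ₁.comp φ₂).v j ∉ range (φ₁.comp φ₂).u := fun ⟨i', h⟩ =>
    compRel_mk_inr_ne_mk_inl h₁.v_inj hj _ (congrArg Subtype.val h).symm
  exact
    { finV := hfin
      u_inj := hu
      v_inj := hv
      hk := lt_natCard_of_injective_of_notMem hu hj'
      hm := lt_natCard_of_injective_of_notMem hv hi'
      cover := eq_univ_of_forall fun ⟨_, hq⟩ =>
        hq.imp (fun ⟨i, hi⟩ => ⟨i, Subtype.ext hi⟩) fun ⟨j, hj⟩ => ⟨j, Subtype.ext hj⟩
      C_ne := h₁.C_ne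
      D_ne := h₂.D_ne
      C_pp := h₁.C_pp
      D_pp := h₂.D_pp
      Φ_pp := φ₁.ppDefinable_comp_Φ φ₂ h₁.Φ_pp h₂.Φ_pp
      C_proper := φ₁.proj_comp_u φ₂ hproj ▸ h₁.C_proper
      D_proper := φ₁.proj_comp_v φ₂ hproj ▸ h₂.D_proper
      forward := fun _ hf hC => h₁.comp_forward h₂ hf hC
      surj := fun _ ha => h₁.comp_surj h₂ ha }

end CompPreImplication

theorem ImplData.exists_isOPMap_comp_iff (φ₁ : ImplData A k m) (φ₂ : ImplData A m n)
    {G : Subgroup (Equiv.Perm A)} (hΦ₁ : ∀ g ∈ G, ∀ f ∈ φ₁.Φ, ⇑g ∘ f ∈ φ₁.Φ)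
    {O₁ : Set (Fin k → A)} (hO₁ : IsGOrbit G O₁) (O₃ : Set (Fin n → A)) :
    (∃ f, (φ₁.comp φ₂).IsOPMap O₁ O₃ f) ↔
      ∃ O₂ : Set (Fin m → A), IsGOrbit G O₂ ∧
        (∃ f, φ₁.IsOPMap O₁ O₂ f) ∧ ∃ f, φ₂.IsOPMap O₂ O₃ f := by
  constructor
  · rintro ⟨f, hf, hfO₁, hfO₃⟩
    obtain ⟨f₁, hf₁, f₂, hf₂, hagree, hu, hv⟩ := φ₁.exists_of_mem_comp φ₂ hf
    refine ⟨orbitOf G (f₁ ∘ φ₁.v), ⟨_, rfl⟩, ⟨f₁, hf₁, hu ▸ hfO₁, mem_orbitOf_self G _⟩,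
      ⟨f₂, hf₂, hagree ▸ mem_orbitOf_self G _, hv ▸ hfO₃⟩⟩
  · rintro ⟨O₂, hO₂, ⟨f₁, hf₁, hf₁O₁, hf₁O₂⟩, ⟨f₂, hf₂, hf₂O₂, hf₂O₃⟩⟩
    obtain ⟨g, hg, hagree⟩ := hO₂.exists_comp_eq hf₁O₂ hf₂O₂
    obtain ⟨f, hf, hu, hv⟩ := φ₁.exists_mem_comp_of_agree φ₂ (hΦ₁ g hg f₁ hf₁) hf₂ hagree
    exact ⟨f, hf, hu ▸ (hO₁.comp_mem_iff hg).2 hf₁O₁, hv ▸ hf₂O₃⟩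

end CSPPaper
open CSPPaper in
theorem stmt11_general {A : Type} (k : ℕ) (G : Subgroup (Equiv.Perm A))
    {σ' : Sig} (Astr : StructOn σ' A)
    (hexp : IsFOExpansion (canonStruct G k) Astr)
    (C D E : Set (Fin k → A)) (φ1 φ2 : ImplData A k k)
    (h1 : φ1.IsImplication Astr C D) (h2 : φ2.IsImplication Astr D E)
    (hproj : proj φ1.v φ1.Φ = proj φ2.u φ2.Φ) :
    (φ1.comp φ2).IsPreImplication Astr C E ∧
    ∀ O1 O3 : Set (Fin k → A),
      IsGOrbit G O1 → O1 ⊆ proj φ1.u φ1.Φ →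
      IsGOrbit G O3 → O3 ⊆ proj φ2.v φ2.Φ →
      ((∃ f, (φ1.comp φ2).IsOPMap O1 O3 f) ↔
        ∃ O2 : Set (Fin k → A), IsGOrbit G O2 ∧
          (∃ f, φ1.IsOPMap O1 O2 f) ∧ ∃ f, φ2.IsOPMap O2 O3 f) := by
  have hΦ1 : ∀ g ∈ G, ∀ f ∈ φ1.Φ, ⇑g ∘ f ∈ φ1.Φ := fun _ hg _ hf =>
    h1.1.Φ_pp.comp_mem_of_mem_subgroup hexp hg hf
  exact ⟨h1.1.comp h2.1 hproj,
    fun _ O3 hO1 _ _ _ => φ1.exists_isOPMap_comp_iff φ2 hΦ1 hO1 O3⟩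

open CSPPaper in
/-- Lemma 3.17, first part: the composition of implications is a
pre-implication, and its `O1O3`-mappings are characterized via intermediate orbits. -/
theorem stmt11 {A : Type} (k : ℕ) (hk : 3 ≤ k) (G : Subgroup (Equiv.Perm A))
    {σ' : Sig} (Astr : StructOn σ' A)
    (hexp : IsFOExpansion (canonStruct G k) Astr)
    (C D E : Set (Fin k → A)) (φ1 φ2 : ImplData A k k)
    (h1 : φ1.IsImplication Astr C D) (h2 : φ2.IsImplication Astr D E)
    (hproj : proj φ1.v φ1.Φ = proj φ2.u φ2.Φ) :
    (φ1.comp φ2).IsPreImplication Astr C E ∧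
    ∀ O1 O3 : Set (Fin k → A),
      IsGOrbit G O1 → O1 ⊆ proj φ1.u φ1.Φ →
      IsGOrbit G O3 → O3 ⊆ proj φ2.v φ2.Φ →
      ((∃ f, (φ1.comp φ2).IsOPMap O1 O3 f) ↔
        ∃ O2 : Set (Fin k → A), IsGOrbit G O2 ∧
          (∃ f, φ1.IsOPMap O1 O2 f) ∧ ∃ f, φ2.IsOPMap O2 O3 f) :=
  stmt11_general k G Astr hexp C D E φ1 φ2 h1 h2 hproj
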